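/- arXiv:2205.06369 — 3 statements merged into one kernel-verified Lean document; each statement's English description precedes it below -/
import Mathlib

section
/- Suppose nonnegative reals p₁₁ᵘ, p₁₀ᵘ, p₀₁ᵘ, p₀₀ᵘ sum to 1 and nonnegative reals p₁₁ᵗ, p₁₀ᵗ, p₀₁ᵗ, p₀₀ᵗ sum to 1, and assume (1) p₁₁ᵘ + p₁₀ᵘ = p₁₁ᵗ + p₁₀ᵗ, and (2) p₁₁ᵘ > p₁₁ᵗ and p₀₁ᵘ > p₀₁ᵗ. Then (1/2)[max(p₁₁ᵘ, p₁₁ᵗ) + max(p₀₁ᵘ, p₀₁ᵗ) + max(p₁₀ᵘ, p₁₀ᵗ) + max(p₀₀ᵘ, p₀₀ᵗ)] = (1/2)(p₁₁ᵘ + p₀₁ᵘ + p₁₀ᵗ + p₀₀ᵗ) = (1/2)[max(p₁₁ᵘ + p₀₁ᵘ, p₁₁ᵗ + p₀₁ᵗ) + max(p₁₀ᵘ + p₀₀ᵘ, p₁₀ᵗ + p₀₀ᵗ)]. In particular, the optimal two-model membership attack accuracy equals the optimal single-model attack accuracy. -/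
theorem zero_one_loss_updates_no_advantage
    (p11u p10u p01u p00u p11t p10t p01t p00t : ℝ)
    (h11u : 0 ≤ p11u) (h10u : 0 ≤ p10u) (h01u : 0 ≤ p01u) (h00u : 0 ≤ p00u)
    (h11t : 0 ≤ p11t) (h10t : 0 ≤ p10t) (h01t : 0 ≤ p01t) (h00t : 0 ≤ p00t)
    (hsumu : p11u + p10u + p01u + p00u = 1)
    (hsumt : p11t + p10t + p01t + p00t = 1)
    (h1 : p11u + p10u = p11t + p10t)
    (h2a : p11t < p11u) (h2b : p01t < p01u) :
    (1 / 2) * (max p11u p11t + max p01u p01t + max p10u p10t + max p00u p00t)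
      = (1 / 2) * (p11u + p01u + p10t + p00t) ∧
    (1 / 2) * (p11u + p01u + p10t + p00t)
      = (1 / 2) * (max (p11u + p01u) (p11t + p01t) + max (p10u + p00u) (p10t + p00t)) := by
  have e1 : max p11u p11t = p11u := max_eq_left h2a.le
  have e2 : max p01u p01t = p01u := max_eq_left h2b.le
  have e3 : max p10u p10t = p10t := max_eq_right (by linarith)
  have e4 : max p00u p00t = p00t := max_eq_right (by linarith)
  have e5 : max (p11u + p01u) (p11t + p01t) = p11u + p01u := max_eq_left (by linarith)
  have e6 : max (p10u + p00u) (p10t + p00t) = p10t + p00t := max_eq_right (by linarith)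
  rw [e1, e2, e3, e4, e5, e6]
  constructor <;> ring
end

section
/- Let μ ∈ ℝᵈ, σ > 0, and n ≥ 2, and let v ∈ ℝᵈ be fixed with ‖v − μ‖₂ ≤ σ√(5d). Let P = N(μ, (σ²/n)·I_d) and Q = (1/n)v + N(((n−1)/n)μ, (σ²(n−1)/n²)·I_d) (i.e., Q is the Gaussian with mean (1/n)v + ((n−1)/n)μ and covariance (σ²(n−1)/n²)·I_d). Then the total variation distance satisfies TV(P, Q) ≤ √(5d/(n−1)) + √d/(n−1). -/
open MeasureTheory ProbabilityTheory
open scoped NNReal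

/-- The isotropic Gaussian `N(m, v·I_d)` on `ℝᵈ`, as a product of
one-dimensional Gaussians. -/
noncomputable def gaussianVec {d : ℕ} (m : Fin d → ℝ) (v : ℝ≥0) :
    Measure (Fin d → ℝ) :=
  Measure.pi fun i => gaussianReal (m i) v

/-- Total variation distance: supremum over measurable events. -/
noncomputable def tvDist {α : Type*} [MeasurableSpace α]
    (P Q : Measure α) : ℝ :=
  sSup {x | ∃ E : Set α, MeasurableSet E ∧
    x = |(P E).toReal - (Q E).toReal|}

/-!
Pass through the Gaussian `R = N(m_Q, (σ²/n)·I)`, which has the mean of `Q` and the covariance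
of `P`. Each of the two distances is controlled by the Bhattacharyya coefficient
`B(p, q) = ∫ √(p q)`: by Cauchy–Schwarz, `∫ |p - q| ≤ ‖√p - √q‖₂ ‖√p + √q‖₂ ≤ 2 √(2 (1 - B))`.
For isotropic Gaussians `B` factorises over the coordinates and is explicit:
`exp (-‖m - m'‖² / (8 v))` for a shift of the mean and `(2 √(v w) / (v + w)) ^ (d / 2)` for a
change of the variance. The bounds `1 - e^{-x} ≤ x` and Bernoulli's inequality turn these into
the two terms of the claim.
-/

open Real

noncomputable def bhattacharyya {α : Type*} [MeasurableSpace α] (p q : α → ℝ) (ν : Measure α) :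
    ℝ :=
  ∫ x, √(p x * q x) ∂ν

section Hellinger

variable {α : Type*} [MeasurableSpace α] {ν : Measure α}

theorem integral_mul_le_sqrt_mul_sqrt {f g : α → ℝ} (hf0 : 0 ≤ᵐ[ν] f) (hg0 : 0 ≤ᵐ[ν] g)
    (hf : MemLp f 2 ν) (hg : MemLp g 2 ν) :
    ∫ x, f x * g x ∂ν ≤ √(∫ x, f x ^ 2 ∂ν) * √(∫ x, g x ^ 2 ∂ν) := by
  have h := integral_mul_le_Lp_mul_Lq_of_nonneg HolderConjugate.two_two hf0 hg0
    (by simpa using hf) (by simpa using hg)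
  simpa only [rpow_two, sqrt_eq_rpow, one_div] using h

theorem memLp_two_sqrt {p : α → ℝ} (hp0 : 0 ≤ p) (hp : Integrable p ν) :
    MemLp (fun x => √(p x)) 2 ν := by
  refine (memLp_two_iff_integrable_sq (by fun_prop)).2 ?_
  simpa [sq_sqrt (hp0 _)] using hp

theorem integral_abs_sub_le_sqrt_bhattacharyya {p q : α → ℝ} (hp0 : 0 ≤ p) (hq0 : 0 ≤ q)
    (hp : Integrable p ν) (hq : Integrable q ν) (hp1 : ∫ x, p x ∂ν = 1)
    (hq1 : ∫ x, q x ∂ν = 1) :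
    ∫ x, |p x - q x| ∂ν ≤ 2 * √(2 * (1 - bhattacharyya p q ν)) := by
  set a := fun x => √(p x)
  set b := fun x => √(q x)
  have ha : MemLp a 2 ν := memLp_two_sqrt hp0 hp
  have hb : MemLp b 2 ν := memLp_two_sqrt hq0 hq
  have hab : Integrable (fun x => a x * b x) ν := ha.integrable_mul hb
  have hpa x : a x ^ 2 = p x := sq_sqrt (hp0 x)
  have hqb x : b x ^ 2 = q x := sq_sqrt (hq0 x)
  have hB : bhattacharyya p q ν = ∫ x, a x * b x ∂ν := by
    simp only [bhattacharyya, a, b, sqrt_mul (hp0 _)]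
  have hfactor x : |p x - q x| = |a x - b x| * (a x + b x) := by
    rw [← hpa, ← hqb, ← abs_of_nonneg (by positivity : 0 ≤ a x + b x), ← abs_mul]
    ring_nf
  have hdiff : ∫ x, |a x - b x| ^ 2 ∂ν = 2 * (1 - bhattacharyya p q ν) := by
    have h x : |a x - b x| ^ 2 = p x + q x - 2 * (a x * b x) := by
      rw [sq_abs, ← hpa, ← hqb]; ring
    simp_rw [h]
    rw [integral_sub (f := fun x => p x + q x) (hp.add hq) (hab.const_mul 2),
      integral_add hp hq, integral_const_mul, hp1, hq1, hB]
    ring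
  have hsum : ∫ x, (a x + b x) ^ 2 ∂ν ≤ 4 := by
    have h x : (a x + b x) ^ 2 ≤ 2 * (p x + q x) := by
      rw [← hpa, ← hqb]; nlinarith [sq_nonneg (a x - b x)]
    calc ∫ x, (a x + b x) ^ 2 ∂ν ≤ ∫ x, 2 * (p x + q x) ∂ν :=
          integral_mono (ha.add hb).integrable_sq ((hp.add hq).const_mul 2) h
      _ = 4 := by rw [integral_const_mul, integral_add hp hq, hp1, hq1]; norm_num
  calc ∫ x, |p x - q x| ∂ν = ∫ x, |a x - b x| * (a x + b x) ∂ν := by simp_rw [hfactor]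
    _ ≤ √(∫ x, |a x - b x| ^ 2 ∂ν) * √(∫ x, (a x + b x) ^ 2 ∂ν) :=
        integral_mul_le_sqrt_mul_sqrt (ae_of_all _ fun _ => abs_nonneg _)
          (ae_of_all _ fun _ => by positivity) (ha.sub hb).abs (ha.add hb)
    _ ≤ √(2 * (1 - bhattacharyya p q ν)) * √4 := by
        rw [hdiff]; gcongr
    _ = 2 * √(2 * (1 - bhattacharyya p q ν)) := by
        rw [show (4 : ℝ) = 2 ^ 2 by norm_num, sqrt_sq zero_le_two, mul_comm]

theorem abs_setIntegral_sub_le_half_integral_abs_sub {p q : α → ℝ} (hp : Integrable p ν)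
    (hq : Integrable q ν) (hpq : ∫ x, p x ∂ν = ∫ x, q x ∂ν) {E : Set α} (hE : MeasurableSet E) :
    |∫ x in E, p x ∂ν - ∫ x in E, q x ∂ν| ≤ (∫ x, |p x - q x| ∂ν) / 2 := by
  have hsub : Integrable (fun x => p x - q x) ν := hp.sub hq
  have hcompl : ∫ x in Eᶜ, (p x - q x) ∂ν = -∫ x in E, (p x - q x) ∂ν := by
    have := integral_add_compl hE hsub
    rw [integral_sub hp hq, hpq, sub_self] at this
    linarith
  have habsE := abs_integral_le_integral_abs (f := fun x => p x - q x) (μ := ν.restrict E)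
  have habsEc := abs_integral_le_integral_abs (f := fun x => p x - q x) (μ := ν.restrict Eᶜ)
  rw [hcompl, abs_neg] at habsEc
  rw [← integral_sub hp.restrict hq.restrict, ← integral_add_compl hE hsub.abs]
  linarith

theorem abs_setIntegral_sub_le_sqrt_bhattacharyya {p q : α → ℝ} (hp0 : 0 ≤ p) (hq0 : 0 ≤ q)
    (hp : Integrable p ν) (hq : Integrable q ν) (hp1 : ∫ x, p x ∂ν = 1)
    (hq1 : ∫ x, q x ∂ν = 1) {E : Set α} (hE : MeasurableSet E) :
    |∫ x in E, p x ∂ν - ∫ x in E, q x ∂ν| ≤ √(2 * (1 - bhattacharyya p q ν)) := by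
  have := integral_abs_sub_le_sqrt_bhattacharyya hp0 hq0 hp hq hp1 hq1
  have := abs_setIntegral_sub_le_half_integral_abs_sub hp hq (hp1.trans hq1.symm) hE
  linarith

end Hellinger

theorem tvDist_le {α : Type*} [MeasurableSpace α] {P Q : Measure α} {c : ℝ}
    (h : ∀ E, MeasurableSet E → |(P E).toReal - (Q E).toReal| ≤ c) : tvDist P Q ≤ c :=
  csSup_le ⟨_, ∅, .empty, rfl⟩ fun _ ⟨E, hE, hx⟩ => hx ▸ h E hE

theorem indicator_univ_pi_prod {ι α M : Type*} [Fintype ι] [CommMonoidWithZero M]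
    (s : ι → Set α) (f : ι → α → M) :
    (Set.univ.pi s).indicator (fun x => ∏ i, f i (x i))
      = fun x => ∏ i, (s i).indicator (f i) (x i) := by
  classical
  ext x
  simp only [Set.indicator_apply, Fintype.prod_ite_zero, Set.mem_univ_pi]

noncomputable def gaussianPDFVec {d : ℕ} (m : Fin d → ℝ) (v : ℝ≥0) (x : Fin d → ℝ) : ℝ :=
  ∏ i, gaussianPDFReal (m i) v (x i)

section GaussianVec

variable {d : ℕ} (m : Fin d → ℝ) {v : ℝ≥0}

theorem gaussianPDFVec_nonneg (v : ℝ≥0) : 0 ≤ gaussianPDFVec m v :=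
  fun _ => Finset.prod_nonneg fun _ _ => gaussianPDFReal_nonneg _ _ _

theorem integrable_gaussianPDFVec (v : ℝ≥0) : Integrable (gaussianPDFVec m v) :=
  Integrable.fintype_prod fun i => integrable_gaussianPDFReal (m i) v

theorem integral_gaussianPDFVec_eq_one (hv : v ≠ 0) : ∫ x, gaussianPDFVec m v x = 1 := by
  simp only [gaussianPDFVec, volume_pi, integral_fintype_prod_eq_prod]
  simp [integral_gaussianPDFReal_eq_one _ hv]

theorem gaussianVec_eq_withDensity (hv : v ≠ 0) :
    gaussianVec m v = volume.withDensity fun x => ENNReal.ofReal (gaussianPDFVec m v x) := by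
  rw [gaussianVec]
  refine Measure.pi_eq fun s hs => ?_
  have hbox : (Set.univ.pi s).indicator (gaussianPDFVec m v)
      = fun x => ∏ i, (s i).indicator (gaussianPDFReal (m i) v) (x i) :=
    indicator_univ_pi_prod s fun i => gaussianPDFReal (m i) v
  rw [withDensity_apply _ (.univ_pi hs),
    ← ofReal_integral_eq_lintegral_ofReal (integrable_gaussianPDFVec m v).restrict
      (ae_of_all _ (gaussianPDFVec_nonneg m v)),
    ← integral_indicator (.univ_pi hs), hbox, volume_pi, integral_fintype_prod_eq_prod,
    ENNReal.ofReal_prod_of_nonneg fun i _ => integral_nonneg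
      (Set.indicator_nonneg fun _ _ => gaussianPDFReal_nonneg _ _ _)]
  simp_rw [integral_indicator (hs _), gaussianReal_apply_eq_integral _ hv]

theorem gaussianVec_toReal_apply (hv : v ≠ 0) {E : Set (Fin d → ℝ)} (hE : MeasurableSet E) :
    (gaussianVec m v E).toReal = ∫ x in E, gaussianPDFVec m v x := by
  rw [gaussianVec_eq_withDensity m hv, withDensity_apply _ hE,
    ← ofReal_integral_eq_lintegral_ofReal (integrable_gaussianPDFVec m v).restrict
      (ae_of_all _ (gaussianPDFVec_nonneg m v)),
    ENNReal.toReal_ofReal (integral_nonneg (gaussianPDFVec_nonneg m v))]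

theorem bhattacharyya_gaussianPDFVec (m' : Fin d → ℝ) (v v' : ℝ≥0) :
    bhattacharyya (gaussianPDFVec m v) (gaussianPDFVec m' v') volume
      = ∏ i, bhattacharyya (gaussianPDFReal (m i) v) (gaussianPDFReal (m' i) v') volume := by
  have h x : √(gaussianPDFVec m v x * gaussianPDFVec m' v' x)
      = ∏ i, √(gaussianPDFReal (m i) v (x i) * gaussianPDFReal (m' i) v' (x i)) := by
    rw [gaussianPDFVec, gaussianPDFVec, ← Finset.prod_mul_distrib,
      sqrt_prod _ fun i _ => mul_nonneg (gaussianPDFReal_nonneg _ _ _)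
        (gaussianPDFReal_nonneg _ _ _)]
  simp only [bhattacharyya, h, volume_pi]
  exact integral_fintype_prod_eq_prod
    (f := fun i y => √(gaussianPDFReal (m i) v y * gaussianPDFReal (m' i) v' y))

theorem abs_gaussianVec_sub_le_sqrt_bhattacharyya (m' : Fin d → ℝ) {v' : ℝ≥0} (hv : v ≠ 0)
    (hv' : v' ≠ 0) {E : Set (Fin d → ℝ)} (hE : MeasurableSet E) :
    |(gaussianVec m v E).toReal - (gaussianVec m' v' E).toReal|
      ≤ √(2 * (1 - bhattacharyya (gaussianPDFVec m v) (gaussianPDFVec m' v') volume)) := by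
  rw [gaussianVec_toReal_apply m hv hE, gaussianVec_toReal_apply m' hv' hE]
  exact abs_setIntegral_sub_le_sqrt_bhattacharyya (gaussianPDFVec_nonneg m v)
    (gaussianPDFVec_nonneg m' v') (integrable_gaussianPDFVec m v)
    (integrable_gaussianPDFVec m' v') (integral_gaussianPDFVec_eq_one m hv)
    (integral_gaussianPDFVec_eq_one m' hv') hE

end GaussianVec

section GaussianReal

variable {v : ℝ≥0}

theorem bhattacharyya_gaussianPDFReal_of_var_eq (a b : ℝ) (hv : v ≠ 0) :
    bhattacharyya (gaussianPDFReal a v) (gaussianPDFReal b v) volume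
      = exp (-(a - b) ^ 2 / (8 * v)) := by
  have hc : 0 ≤ (√(2 * π * v))⁻¹ := by positivity
  -- the geometric mean of the two densities is a multiple of the density centred at `(a + b) / 2`
  have h x : √(gaussianPDFReal a v x * gaussianPDFReal b v x)
      = exp (-(a - b) ^ 2 / (8 * v)) * gaussianPDFReal ((a + b) / 2) v x := by
    rw [gaussianPDFReal, gaussianPDFReal, gaussianPDFReal, mul_mul_mul_comm,
      sqrt_mul (mul_nonneg hc hc), sqrt_mul_self hc, ← exp_add, ← exp_half]
    have harg : (-(x - a) ^ 2 / (2 * v) + -(x - b) ^ 2 / (2 * v)) / 2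
        = -(a - b) ^ 2 / (8 * v) + -(x - (a + b) / 2) ^ 2 / (2 * v) := by
      field_simp
      ring
    rw [harg, exp_add]
    ring
  simp only [bhattacharyya, h, integral_const_mul, integral_gaussianPDFReal_eq_one _ hv, mul_one]

theorem bhattacharyya_gaussianPDFReal_of_mean_eq (m : ℝ) {w : ℝ≥0} (hv : v ≠ 0) (hw : w ≠ 0) :
    bhattacharyya (gaussianPDFReal m v) (gaussianPDFReal m w) volume
      = √(2 * √(v * w) / (v + w)) := by
  have hv0 : (0 : ℝ) < v := by positivity
  have hw0 : (0 : ℝ) < w := by positivity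
  set B : ℝ := (v + w) / (4 * v * w) with hB
  have hcv : 0 ≤ (√(2 * π * v))⁻¹ := by positivity
  have hcw : 0 ≤ (√(2 * π * w))⁻¹ := by positivity
  have h x : √(gaussianPDFReal m v x * gaussianPDFReal m w x)
      = √((√(2 * π * v))⁻¹ * (√(2 * π * w))⁻¹) * exp (-(B * (x - m) ^ 2)) := by
    rw [gaussianPDFReal, gaussianPDFReal, mul_mul_mul_comm, sqrt_mul (mul_nonneg hcv hcw),
      ← exp_add, ← exp_half]
    congr 2
    rw [hB]
    field_simp
    ring
  have hgauss : ∫ x, exp (-(B * (x - m) ^ 2)) = √(π / B) := by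
    rw [integral_sub_right_eq_self (fun x => exp (-(B * x ^ 2))) m]
    simpa only [neg_mul] using integral_gaussian B
  simp only [bhattacharyya, h, integral_const_mul, hgauss]
  rw [← sqrt_mul (mul_nonneg hcv hcw)]
  congr 1
  have h2pi : √(2 * π * v) * √(2 * π * w) = 2 * π * √(v * w) := by
    rw [← sqrt_mul (by positivity), show 2 * π * v * (2 * π * w) = (2 * π) ^ 2 * (v * w) by ring,
      sqrt_mul (by positivity), sqrt_sq (by positivity)]
  have hvw : √((v : ℝ) * w) ^ 2 = v * w := sq_sqrt (by positivity)
  have : 0 < √((v : ℝ) * w) := by positivity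
  rw [← mul_inv, h2pi, hB]
  field_simp
  linear_combination -4 * hvw

end GaussianReal

theorem one_sub_sqrt_two_sqrt_mul_div_add_le {t s : ℝ} (ht : 0 < t) (hs : 0 < s) :
    1 - √(2 * √(t * s) / (t + s)) ≤ ((t - s) / (t + s)) ^ 2 := by
  obtain ⟨a, ha, rfl⟩ : ∃ a, 0 < a ∧ a ^ 2 = t := ⟨√t, by positivity, sq_sqrt ht.le⟩
  obtain ⟨b, hb, rfl⟩ : ∃ b, 0 < b ∧ b ^ 2 = s := ⟨√s, by positivity, sq_sqrt hs.le⟩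
  set r := 2 * √(a ^ 2 * b ^ 2) / (a ^ 2 + b ^ 2) with hrdef
  have hr : r = 2 * a * b / (a ^ 2 + b ^ 2) := by
    rw [hrdef, ← mul_pow, sqrt_sq (by positivity), mul_assoc]
  have hr1 : r ≤ 1 := by
    rw [hr, div_le_one (by positivity)]
    nlinarith [sq_nonneg (a - b)]
  -- `1 - √r ≤ 1 - r` as `r ≤ 1`, and `1 - r = (a - b)² / (a² + b²)` while `a² + b² ≤ (a + b)²`
  have hsqrt : r ≤ √r := by
    rw [le_sqrt (by positivity) (by positivity)]
    nlinarith [show 0 ≤ r by positivity]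
  have hkey : 1 - r ≤ ((a ^ 2 - b ^ 2) / (a ^ 2 + b ^ 2)) ^ 2 := by
    rw [hr, div_pow, one_sub_div (by positivity : a ^ 2 + b ^ 2 ≠ 0),
      div_le_div_iff₀ (by positivity) (by positivity)]
    nlinarith [mul_nonneg (sq_nonneg (a - b)) (mul_pos ha hb).le]
  linarith

section GaussianVecBounds

variable {d : ℕ} {E : Set (Fin d → ℝ)}

theorem abs_gaussianVec_sub_of_var_eq_le (m m' : Fin d → ℝ) {v : ℝ≥0} (hv : v ≠ 0)
    (hE : MeasurableSet E) :
    |(gaussianVec m v E).toReal - (gaussianVec m' v E).toReal|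
      ≤ √(∑ i, (m i - m' i) ^ 2 / (4 * v)) := by
  refine (abs_gaussianVec_sub_le_sqrt_bhattacharyya m m' hv hv hE).trans (sqrt_le_sqrt ?_)
  set D := ∑ i, (m i - m' i) ^ 2
  have hbc : bhattacharyya (gaussianPDFVec m v) (gaussianPDFVec m' v) volume
      = exp (-(D / (8 * v))) := by
    simp only [bhattacharyya_gaussianPDFVec, bhattacharyya_gaussianPDFReal_of_var_eq _ _ hv,
      ← exp_sum, neg_div, Finset.sum_neg_distrib, D, Finset.sum_div]
  have hexp := add_one_le_exp (-(D / (8 * v)))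
  rw [hbc, ← Finset.sum_div]
  linear_combination 2 * hexp

theorem abs_gaussianVec_sub_of_mean_eq_le (m : Fin d → ℝ) {v w : ℝ≥0} (hv : v ≠ 0) (hw : w ≠ 0)
    (hE : MeasurableSet E) :
    |(gaussianVec m v E).toReal - (gaussianVec m w E).toReal|
      ≤ √(2 * d) * |((v : ℝ) - w) / (v + w)| := by
  refine (abs_gaussianVec_sub_le_sqrt_bhattacharyya m m hv hw hE).trans ?_
  set c := √(2 * √(v * w) / (v + w))
  have hbc : bhattacharyya (gaussianPDFVec m v) (gaussianPDFVec m w) volume = c ^ d := by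
    simp only [bhattacharyya_gaussianPDFVec, bhattacharyya_gaussianPDFReal_of_mean_eq _ hv hw,
      Finset.prod_const, Finset.card_univ, Fintype.card_fin, c]
  have hc := one_sub_sqrt_two_sqrt_mul_div_add_le (t := v) (s := w) (by positivity)
    (by positivity)
  have hc0 : 0 ≤ c := sqrt_nonneg _
  have hbernoulli := one_add_mul_sub_le_pow (a := c) (by linarith) d
  rw [hbc, ← sqrt_sq_eq_abs, ← sqrt_mul (by positivity)]
  refine sqrt_le_sqrt ?_
  nlinarith [(Nat.cast_nonneg d : (0 : ℝ) ≤ d)]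

end GaussianVecBounds

section Arithmetic

variable {N σ : ℝ}

theorem sum_sq_sub_shrunk_div_le {d : ℕ} (hN : 2 ≤ N) (hσ : 0 < σ) (μ v : Fin d → ℝ)
    (hv : √(∑ i, (v i - μ i) ^ 2) ≤ σ * √(5 * d)) :
    ∑ i, (μ i - (1 / N * v i + (N - 1) / N * μ i)) ^ 2 / (4 * (σ ^ 2 / N))
      ≤ 5 * d / (N - 1) := by
  have hS : ∑ i, (v i - μ i) ^ 2 ≤ 5 * d * σ ^ 2 := by
    have := pow_le_pow_left₀ (sqrt_nonneg _) hv 2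
    rwa [sq_sqrt (Finset.sum_nonneg fun _ _ => sq_nonneg _), mul_pow, sq_sqrt (by positivity),
      mul_comm] at this
  have hsum : ∑ i, (μ i - (1 / N * v i + (N - 1) / N * μ i)) ^ 2 / (4 * (σ ^ 2 / N))
      = (∑ i, (v i - μ i) ^ 2) / (4 * σ ^ 2 * N) := by
    rw [Finset.sum_div]
    refine Finset.sum_congr rfl fun i _ => ?_
    field_simp
    ring
  rw [hsum, div_le_div_iff₀ (by positivity) (by linarith)]
  nlinarith [mul_le_mul_of_nonneg_right hS (by linarith : (0 : ℝ) ≤ N - 1),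
    mul_nonneg (Nat.cast_nonneg d : (0 : ℝ) ≤ d) (sq_nonneg σ)]

theorem sqrt_two_mul_abs_sub_div_add_le (d : ℕ) (hN : 2 ≤ N) (hσ : σ ≠ 0) :
    √(2 * d) * |(σ ^ 2 / N - σ ^ 2 * (N - 1) / N ^ 2) / (σ ^ 2 / N + σ ^ 2 * (N - 1) / N ^ 2)|
      ≤ √d / (N - 1) := by
  have hratio : (σ ^ 2 / N - σ ^ 2 * (N - 1) / N ^ 2) / (σ ^ 2 / N + σ ^ 2 * (N - 1) / N ^ 2)
      = 1 / (2 * N - 1) := by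
    have : 2 * N - 1 ≠ 0 := by linarith
    field_simp
    ring
  have hsqrt2 : √2 * (N - 1) ≤ 2 * N - 1 := by
    nlinarith [(sqrt_le_left zero_le_two).2 (by norm_num : (2 : ℝ) ≤ 2 ^ 2)]
  rw [hratio, abs_of_pos (one_div_pos.2 (by linarith)), sqrt_mul zero_le_two, mul_one_div,
    div_le_div_iff₀ (by linarith) (by linarith)]
  linarith [mul_le_mul_of_nonneg_left hsqrt2 (sqrt_nonneg d)]

end Arithmetic

theorem tv_bound_mean_estimation (d n : ℕ) (hn : 2 ≤ n)
    (μ v : Fin d → ℝ) (σ : ℝ) (hσ : 0 < σ)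
    (hv : Real.sqrt (∑ i, (v i - μ i) ^ 2) ≤ σ * Real.sqrt (5 * d))
    (P Q : Measure (Fin d → ℝ))
    (hP : P = gaussianVec μ (⟨σ ^ 2 / n, by positivity⟩ : ℝ≥0))
    (hQ : Q = gaussianVec
        (fun i => (1 / (n : ℝ)) * v i + (((n : ℝ) - 1) / n) * μ i)
        (Real.toNNReal (σ ^ 2 * ((n : ℝ) - 1) / (n : ℝ) ^ 2))) :
    tvDist P Q ≤ Real.sqrt (5 * d / ((n : ℝ) - 1)) + Real.sqrt d / ((n : ℝ) - 1) := by
  have hN : (2 : ℝ) ≤ n := by exact_mod_cast hn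
  set t : ℝ≥0 := ⟨σ ^ 2 / n, by positivity⟩
  set s := Real.toNNReal (σ ^ 2 * ((n : ℝ) - 1) / (n : ℝ) ^ 2)
  have hs : (s : ℝ) = σ ^ 2 * ((n : ℝ) - 1) / (n : ℝ) ^ 2 :=
    Real.coe_toNNReal _ (div_nonneg (mul_nonneg (sq_nonneg σ) (by linarith)) (sq_nonneg _))
  have ht0 : t ≠ 0 := by
    rw [← NNReal.coe_ne_zero, show (t : ℝ) = σ ^ 2 / n from rfl]
    positivity
  have hs0 : s ≠ 0 := by
    rw [← NNReal.coe_ne_zero, hs]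
    exact (div_pos (mul_pos (pow_pos hσ 2) (by linarith)) (by positivity)).ne'
  set R := gaussianVec (fun i => (1 / (n : ℝ)) * v i + (((n : ℝ) - 1) / n) * μ i) t
  subst hP hQ
  refine tvDist_le fun E hE => ?_
  calc _ ≤ |(gaussianVec μ t E).toReal - (R E).toReal|
        + |(R E).toReal - (gaussianVec _ s E).toReal| := abs_sub_le _ _ _
    _ ≤ _ := add_le_add
        ((abs_gaussianVec_sub_of_var_eq_le _ _ ht0 hE).trans
          (sqrt_le_sqrt (sum_sq_sub_shrunk_div_le hN hσ μ v hv)))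
        ((abs_gaussianVec_sub_of_mean_eq_le _ ht0 hs0 hE).trans
          (by rw [hs]; exact sqrt_two_mul_abs_sub_div_add_le d hN hσ.ne'))
end

section
/- Fix μ ∈ ℝᵈ, σ > 0, n₁ ≥ 2, and v ∈ ℝᵈ with ‖v − μ‖₂² ≥ σ²d/2 and ‖v − μ‖₂² ≤ 5σ²d. Let the OUT statistic be S_out ∼ N(0, c/n₁) and the IN statistic be S_in ∼ N((1/n₁)‖v−μ‖₂², c(n₁−1)/n₁²), where c = ‖v−μ‖₂²σ². Consider the test that declares IN iff the statistic exceeds T = (1/(2n₁))‖v−μ‖₂². Then the average success probability (1/2)Pr[S_out ≤ T] + (1/2)Pr[S_in > T] is at least Φ(√(d/(80(n₁−1)))), where Φ is the standard Gaussian CDF. -/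
open MeasureTheory ProbabilityTheory
open scoped NNReal

/-- The standard Gaussian CDF. -/
noncomputable def Phi (z : ℝ) : ℝ := ((gaussianReal 0 1) (Set.Iic z)).toReal

lemma gauss_map (m : ℝ) (w : ℝ≥0) :
    (gaussianReal 0 1).map (fun x => Real.sqrt w * x + m) = gaussianReal m w := by
  have h1 : (gaussianReal 0 1).map (fun x => Real.sqrt w * x) = gaussianReal 0 w := by
    rw [show (fun x : ℝ => Real.sqrt w * x) = (Real.sqrt w * ·) from rfl,
      gaussianReal_map_const_mul]
    congr 1
    · ring
    · ext
      simp [Real.sq_sqrt w.coe_nonneg]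
  have h2 : (fun x : ℝ => Real.sqrt w * x + m) = (· + m) ∘ (fun x => Real.sqrt w * x) := rfl
  rw [h2, ← Measure.map_map (by fun_prop) (by fun_prop), h1, gaussianReal_map_add_const]
  simp

lemma gauss_Iic (m : ℝ) (w : ℝ≥0) (hw : 0 < (w : ℝ)) (t : ℝ) :
    gaussianReal m w (Set.Iic t) = gaussianReal 0 1 (Set.Iic ((t - m) / Real.sqrt w)) := by
  have hs : (0 : ℝ) < Real.sqrt w := Real.sqrt_pos.2 hw
  rw [← gauss_map m w, Measure.map_apply (by fun_prop) measurableSet_Iic]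
  congr 1
  ext x
  simp only [Set.mem_preimage, Set.mem_Iic]
  rw [le_div_iff₀ hs]
  constructor <;> intro h <;> nlinarith

lemma gauss_Ioi (m : ℝ) (w : ℝ≥0) (hw : 0 < (w : ℝ)) (t : ℝ) :
    gaussianReal m w (Set.Ioi t) = gaussianReal 0 1 (Set.Iic ((m - t) / Real.sqrt w)) := by
  have hs : (0 : ℝ) < Real.sqrt w := Real.sqrt_pos.2 hw
  have hneg : (gaussianReal 0 1).map ((-1 : ℝ) * ·) = gaussianReal 0 1 := by
    rw [gaussianReal_map_const_mul]
    congr 1 <;> [ring; (ext; norm_num)]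
  rw [← gauss_map m w, Measure.map_apply (by fun_prop) measurableSet_Ioi]
  have hpre : (fun x => Real.sqrt w * x + m) ⁻¹' Set.Ioi t = Set.Ioi ((t - m) / Real.sqrt w) := by
    ext x
    simp only [Set.mem_preimage, Set.mem_Ioi]
    rw [div_lt_iff₀ hs]
    constructor <;> intro h <;> nlinarith
  rw [hpre]
  -- symmetry
  have h2 : gaussianReal 0 1 (Set.Iic ((m - t) / Real.sqrt w))
      = gaussianReal 0 1 (Set.Ici ((t - m) / Real.sqrt w)) := by
    conv_lhs => rw [← hneg]
    rw [Measure.map_apply (by fun_prop) measurableSet_Iic]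
    congr 1
    have he : (m - t) / Real.sqrt w = -((t - m) / Real.sqrt w) := by ring
    ext x
    simp only [Set.mem_preimage, Set.mem_Iic, Set.mem_Ici, he]
    constructor <;> intro h <;> linarith
  rw [h2]
  have hsing : gaussianReal 0 1 {(t - m) / Real.sqrt w} = 0 :=
    gaussianReal_absolutelyContinuous 0 one_ne_zero (measure_singleton _)
  have hIci : Set.Ici ((t - m) / Real.sqrt w) = {(t - m) / Real.sqrt w} ∪ Set.Ioi ((t - m) / Real.sqrt w) := by
    ext x
    simp only [Set.mem_Ici, Set.mem_union, Set.mem_singleton_iff, Set.mem_Ioi]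
    constructor
    · intro h; rcases eq_or_lt_of_le h with h | h; · exact Or.inl h.symm
      · exact Or.inr h
    · rintro (rfl | h)
      · exact le_refl _
      · exact h.le
  rw [hIci, measure_union (Set.disjoint_singleton_left.mpr (by simp)) measurableSet_Ioi,
    hsing, zero_add]

lemma Phi_mono {a b : ℝ} (h : a ≤ b) : Phi a ≤ Phi b :=
  ENNReal.toReal_mono (measure_ne_top _ _) (measure_mono (Set.Iic_subset_Iic.mpr h))

theorem update_attack_success_lower_bound (d n₁ : ℕ) (hd : 1 ≤ d) (hn₁ : 2 ≤ n₁)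
    (μ v : Fin d → ℝ) (σ : ℝ) (hσ : 0 < σ)
    (nv : ℝ) (hnv : nv = ∑ i, (v i - μ i) ^ 2)
    (hlb : σ ^ 2 * d / 2 ≤ nv) (hub : nv ≤ 5 * σ ^ 2 * d)
    (c : ℝ) (hc : c = nv * σ ^ 2)
    (T : ℝ) (hT : T = (1 / (2 * (n₁ : ℝ))) * nv) :
    Phi (Real.sqrt ((d : ℝ) / (80 * ((n₁ : ℝ) - 1))))
      ≤ (1 / 2) * ((gaussianReal 0 (Real.toNNReal (c / n₁))) (Set.Iic T)).toReal
        + (1 / 2) * ((gaussianReal ((1 / (n₁ : ℝ)) * nv)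
            (Real.toNNReal (c * ((n₁ : ℝ) - 1) / (n₁ : ℝ) ^ 2)))
            (Set.Ioi T)).toReal := by
  have hn : (2 : ℝ) ≤ (n₁ : ℝ) := by exact_mod_cast hn₁
  have hnpos : (0 : ℝ) < n₁ := by linarith
  have hn1 : (0 : ℝ) < (n₁ : ℝ) - 1 := by linarith
  have hd' : (1 : ℝ) ≤ d := by exact_mod_cast hd
  have hnv_pos : 0 < nv := lt_of_lt_of_le (by positivity) hlb
  have hc_pos : 0 < c := by rw [hc]; positivity
  have hT_pos : 0 < T := by rw [hT]; positivity
  have hu1 : (0 : ℝ) < c / n₁ := by positivity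
  have hu2 : (0 : ℝ) < c * ((n₁ : ℝ) - 1) / (n₁ : ℝ) ^ 2 := by positivity
  have hw1c : ((Real.toNNReal (c / n₁)) : ℝ) = c / n₁ := Real.coe_toNNReal _ hu1.le
  have hw2c : ((Real.toNNReal (c * ((n₁ : ℝ) - 1) / (n₁ : ℝ) ^ 2)) : ℝ)
      = c * ((n₁ : ℝ) - 1) / (n₁ : ℝ) ^ 2 := Real.coe_toNNReal _ hu2.le
  have e1 : ((gaussianReal 0 (Real.toNNReal (c / n₁))) (Set.Iic T)).toReal
      = Phi ((T - 0) / Real.sqrt (c / n₁)) := by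
    rw [Phi, gauss_Iic 0 _ (by rw [hw1c]; exact hu1) T, hw1c]
  have hm : (1 / (n₁ : ℝ)) * nv - T = T := by rw [hT]; field_simp; ring
  have e2 : ((gaussianReal ((1 / (n₁ : ℝ)) * nv)
        (Real.toNNReal (c * ((n₁ : ℝ) - 1) / (n₁ : ℝ) ^ 2))) (Set.Ioi T)).toReal
      = Phi (T / Real.sqrt (c * ((n₁ : ℝ) - 1) / (n₁ : ℝ) ^ 2)) := by
    rw [Phi, gauss_Ioi _ _ (by rw [hw2c]; exact hu2) T, hw2c, hm]
  -- generic bound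
  have sqrt_bound : ∀ u : ℝ, 0 < u → (d : ℝ) / (80 * ((n₁ : ℝ) - 1)) ≤ T ^ 2 / u →
      Real.sqrt ((d : ℝ) / (80 * ((n₁ : ℝ) - 1))) ≤ T / Real.sqrt u := by
    intro u hu hle
    have h1 : Real.sqrt ((d : ℝ) / (80 * ((n₁ : ℝ) - 1))) ≤ Real.sqrt (T ^ 2 / u) :=
      Real.sqrt_le_sqrt hle
    rwa [Real.sqrt_div (sq_nonneg T) u, Real.sqrt_sq hT_pos.le] at h1
  have key1 : (d : ℝ) / (80 * ((n₁ : ℝ) - 1)) ≤ T ^ 2 / (c / n₁) := by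
    have h1 : T ^ 2 / (c / n₁) = nv / (4 * (n₁ : ℝ) * σ ^ 2) := by
      rw [hT, hc]; field_simp; ring
    rw [h1, div_le_div_iff₀ (by positivity) (by positivity)]
    nlinarith [mul_le_mul_of_nonneg_right hlb (by positivity : (0:ℝ) ≤ 80 * ((n₁:ℝ) - 1)),
      mul_nonneg (mul_nonneg (by linarith : (0:ℝ) ≤ 36 * (n₁:ℝ) - 40) (sq_nonneg σ))
        (by positivity : (0:ℝ) ≤ (d:ℝ))]
  have key2 : (d : ℝ) / (80 * ((n₁ : ℝ) - 1)) ≤ T ^ 2 / (c * ((n₁ : ℝ) - 1) / (n₁ : ℝ) ^ 2) := by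
    have h2 : T ^ 2 / (c * ((n₁ : ℝ) - 1) / (n₁ : ℝ) ^ 2) = nv / (4 * σ ^ 2 * ((n₁ : ℝ) - 1)) := by
      rw [hT, hc]; field_simp; ring
    rw [h2, div_le_div_iff₀ (by positivity) (by positivity)]
    nlinarith [mul_le_mul_of_nonneg_right hlb (by positivity : (0:ℝ) ≤ 80 * ((n₁:ℝ) - 1)),
      mul_nonneg (mul_nonneg hn1.le (sq_nonneg σ)) (by positivity : (0:ℝ) ≤ (d:ℝ))]
  have b1 := Phi_mono (sqrt_bound _ hu1 key1)
  have b2 := Phi_mono (sqrt_bound _ hu2 key2)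
  rw [e1, e2]
  rw [show T - 0 = T by ring]
  linarith
end
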